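/- arXiv:1011.6166 — 3 statements merged into one kernel-verified Lean document; each statement's English description precedes it below -/
import Mathlib

section
/- Let T be an interval exchange transformation of r ≥ 2 intervals of [0,1) with discontinuity points 0 = β_0 < β_1 < ⋯ < β_{r−1} < β_r = 1, satisfying the infinite distinct orbit condition and having balanced partition lengths with constant c > 0. Let f(x) = Σ_{i=0}^{r−1} (−c_i⁺ log{x − β_i}) + Σ_{i=0}^{r−1} (−c_{i+1}⁻ log{β_{i+1} − x}) with all c_i⁺, c_{i+1}⁻ > 0, and let f′ denote its pointwise derivative. Then for every 0 < η < 1 there exists δ > 0 such that for every j ≥ 6c² and every 0 ≤ i ≤ (r−1)j, the Lebesgue measure of the set {x ∈ Δ_i^j : |f′^{(j)}(x)| > δ j} is greater than η · d_i^j, where Δ_i^j is the i-th subinterval of the partition P_j and d_i^j is its length. -/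
open MeasureTheory Filter Set
open scoped ENNReal

def IsGap (S : Set ℝ) (a b : ℝ) : Prop :=
  a ∈ S ∧ b ∈ S ∧ a < b ∧ ∀ z ∈ S, z ≤ a ∨ b ≤ z

def partPts (r : ℕ) (β : ℕ → ℝ) (Tinv : ℝ → ℝ) (j : ℕ) : Set ℝ :=
  {0, 1} ∪ {x | ∃ i k : ℕ, 1 ≤ i ∧ i < r ∧ k < j ∧ x = Tinv^[k] (β i)}

def partPts2 (β : ℕ → ℝ) (T Tinv : ℝ → ℝ) (i k j : ℕ) : Set ℝ :=
  {0, 1} ∪ {x | ∃ l : ℕ, l < j ∧ x = T^[l] (Tinv^[k] (β i))}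

def BalancedPartitionLengths (r : ℕ) (β : ℕ → ℝ) (T Tinv : ℝ → ℝ) (c : ℝ) : Prop :=
  (∀ j : ℕ, 1 ≤ j → ∀ a b : ℝ, IsGap (partPts r β Tinv j) a b →
    1 / (c * j) ≤ b - a ∧ b - a ≤ c / j) ∧
  (∀ j : ℕ, 1 ≤ j → ∀ i : ℕ, i < r → ∀ k : ℕ, k < j →
    ∀ a b : ℝ, IsGap (partPts2 β T Tinv i k j) a b →
      1 / (c * j) ≤ b - a ∧ b - a ≤ c / j)

noncomputable def birkhoff (T : ℝ → ℝ) (h : ℝ → ℝ) (j : ℕ) (x : ℝ) : ℝ :=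
  ∑ k ∈ Finset.range j, h (T^[k] x)

noncomputable def logf (r : ℕ) (β : ℕ → ℝ) (cp cm : ℕ → ℝ) (x : ℝ) : ℝ :=
  (∑ i ∈ Finset.range r, -(cp i * Real.log (Int.fract (x - β i)))) +
  (∑ i ∈ Finset.range r, -(cm (i + 1) * Real.log (Int.fract (β (i + 1) - x))))

noncomputable def logfD (r : ℕ) (β : ℕ → ℝ) (cp cm : ℕ → ℝ) (x : ℝ) : ℝ :=
  (∑ i ∈ Finset.range r, -(cp i / Int.fract (x - β i))) +
  (∑ i ∈ Finset.range r, cm (i + 1) / Int.fract (β (i + 1) - x))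

def IDOC (r : ℕ) (β : ℕ → ℝ) (T : ℝ → ℝ) : Prop :=
  (∀ i : ℕ, 1 ≤ i → i < r → (Set.range fun n : ℕ => T^[n] (β i)).Infinite) ∧
  (∀ i i' : ℕ, 1 ≤ i → i < r → 1 ≤ i' → i' < r → i ≠ i' →
    Disjoint (Set.range fun n : ℕ => T^[n] (β i)) (Set.range fun n : ℕ => T^[n] (β i')))

/-!
On a subinterval `(a, b)` of `P_j` no point `T^{-k} β_i`, `k < j`, is interior, so each `T^k`,
`k < j`, translates `(a, b)` into a single continuity interval `(β_i, β_{i+1})`. On such an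
interval every summand of `f'` is nondecreasing, hence so is `f'^{(j)}` on `(a, b)`. Since `a`
is `β_0` or some `T^{-k₀} β_{i₀}` with `k₀ < j`, the summand `-c_{i₀}⁺ / {y - β_{i₀}}` of `f'` at
`y = T^{k₀} x` is `-c_{i₀}⁺ / (x - a)`, which gives `f'^{(j)}` slope at least `min c⁺ / (b - a)²`.
Hence `{x ∈ (a, b) : |f'^{(j)}(x)| ≤ δ j}` has length at most `2 δ j (b - a)² / min c⁺`, which is
at most `(1 - η)(b - a) / 2` for `δ = (1 - η) min c⁺ / (4c)` because `b - a ≤ c / j`.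
-/

theorem Set.LeftInvOn.iterate {α : Type*} {f g : α → α} {s : Set α} (h : LeftInvOn g f s)
    (hf : MapsTo f s s) (n : ℕ) : LeftInvOn g^[n] f^[n] s := by
  induction n with
  | zero => exact fun _ _ => rfl
  | succ n ih =>
    intro x hx
    rw [Function.iterate_succ_apply' (f := f), Function.iterate_succ_apply (f := g),
      h (hf.iterate n hx), ih hx]

section Breakpoints

variable {r : ℕ} {β : ℕ → ℝ}

theorem exists_between_consecutive (hβ0 : β 0 = 0) (hβr : β r = 1) {u v : ℝ} (hu : 0 ≤ u)
    (hv : v ≤ 1) (havoid : ∀ i, 1 ≤ i → i < r → β i ∉ Ioo u v) :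
    ∃ i < r, β i ≤ u ∧ v ≤ β (i + 1) := by
  classical
  have hr : 0 < r := Nat.pos_of_ne_zero (by rintro rfl; linarith)
  set i := Nat.findGreatest (fun i => β i ≤ u) (r - 1)
  have hiu : β i ≤ u :=
    Nat.findGreatest_spec (P := fun i => β i ≤ u) (Nat.zero_le _) (by rwa [hβ0])
  have hir : i < r := (Nat.findGreatest_le (r - 1)).trans_lt (by omega)
  refine ⟨i, hir, hiu, not_lt.1 fun hlt => ?_⟩
  rcases (show i + 1 ≤ r by omega).eq_or_lt with hr' | hr'
  · rw [hr', hβr] at hlt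
    linarith
  · have hu' : u < β (i + 1) :=
      not_le.1 (Nat.findGreatest_is_greatest (P := fun i => β i ≤ u) i.lt_succ_self (by omega))
    exact havoid (i + 1) (by omega) hr' ⟨hu', hlt⟩

theorem breakpoint_mem_Icc (hβ : StrictMonoOn β (Iic r)) (hβ0 : β 0 = 0) (hβr : β r = 1)
    {k : ℕ} (hk : k ≤ r) : β k ∈ Icc 0 1 :=
  ⟨hβ0 ▸ hβ.monotoneOn (Nat.zero_le r) hk (Nat.zero_le k),
    hβr ▸ hβ.monotoneOn hk self_mem_Iic hk⟩

theorem breakpoint_mem_Ico (hβ : StrictMonoOn β (Iic r)) (hβ0 : β 0 = 0) (hβr : β r = 1)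
    {k : ℕ} (hk : k < r) : β k ∈ Ico 0 1 :=
  ⟨(breakpoint_mem_Icc hβ hβ0 hβr hk.le).1, hβr ▸ hβ hk.le self_mem_Iic hk⟩

/-- On `(β i₀, β (i₀ + 1))` the integer part of `x - β k` is `0` for `k ≤ i₀` and `-1` for
`k > i₀`. -/
theorem fract_sub_breakpoint (hβ : StrictMonoOn β (Iic r)) (hβ0 : β 0 = 0) (hβr : β r = 1)
    {i₀ k : ℕ} (hi₀ : i₀ < r) (hk : k ≤ r) {u v : ℝ} (hu : β i₀ < u) (huv : u ≤ v)
    (hv : v < β (i₀ + 1)) :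
    0 < Int.fract (u - β k) ∧ Int.fract (v - β k) = Int.fract (u - β k) + (v - u) := by
  have hmono := hβ.monotoneOn
  have hβi₀ := breakpoint_mem_Icc hβ hβ0 hβr hi₀.le
  have hβi₁ := breakpoint_mem_Icc hβ hβ0 hβr (Nat.succ_le_of_lt hi₀)
  have hβk := breakpoint_mem_Icc hβ hβ0 hβr hk
  set e : ℝ := if i₀ < k then 1 else 0
  have hfract : ∀ x, β i₀ < x → x < β (i₀ + 1) →
      0 < x - β k + e ∧ Int.fract (x - β k) = x - β k + e := by
    intro x hx₀ hx₁
    have hmem : 0 < x - β k + e ∧ x - β k + e < 1 := by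
      by_cases hki : i₀ < k
      · have := hmono (Nat.succ_le_of_lt hi₀) hk hki
        simp only [e, if_pos hki]
        constructor <;> linarith [hβi₀.1, hβk.2]
      · have := hmono hk hi₀.le (not_lt.1 hki)
        simp only [e, if_neg hki]
        constructor <;> linarith [hβk.1, hβi₁.2]
    refine ⟨hmem.1, ?_⟩
    rw [← Int.fract_eq_self.2 ⟨hmem.1.le, hmem.2⟩]
    by_cases hki : i₀ < k
    · simp only [e, if_pos hki, Int.fract_add_one]
    · simp only [e, if_neg hki, add_zero]
  obtain ⟨hu₀, hfu⟩ := hfract u hu (huv.trans_lt hv)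
  obtain ⟨-, hfv⟩ := hfract v (hu.trans_le huv) hv
  exact ⟨hfu ▸ hu₀, by rw [hfu, hfv]; ring⟩

variable {cp cm : ℕ → ℝ}

theorem logfD_sub_logfD_ge (hβ : StrictMonoOn β (Iic r)) (hβ0 : β 0 = 0) (hβr : β r = 1)
    (hcp : ∀ i < r, 0 < cp i) (hcm : ∀ i < r, 0 < cm (i + 1)) {i₀ : ℕ} (hi₀ : i₀ < r)
    {u v : ℝ} (hu : β i₀ < u) (huv : u ≤ v) (hv : v < β (i₀ + 1)) {i : ℕ} (hi : i < r) :
    cp i / Int.fract (u - β i) - cp i / Int.fract (v - β i) ≤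
      logfD r β cp cm v - logfD r β cp cm u := by
  have hfract := fun {k} (hk : k ≤ r) => fract_sub_breakpoint hβ hβ0 hβr hi₀ hk hu huv hv
  have hA : ∀ k < r,
      0 ≤ -(cp k / Int.fract (v - β k)) - -(cp k / Int.fract (u - β k)) := by
    intro k hk
    obtain ⟨hpos, heq⟩ := hfract hk.le
    have := div_le_div_of_nonneg_left (hcp k hk).le hpos
      (show Int.fract (u - β k) ≤ Int.fract (v - β k) by linarith)
    linarith
  have hB : ∀ k < r, 0 ≤ cm (k + 1) / Int.fract (β (k + 1) - v) -
      cm (k + 1) / Int.fract (β (k + 1) - u) := by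
    intro k hk
    obtain ⟨hpos, heq⟩ := hfract (Nat.succ_le_of_lt hk)
    have hneg : ∀ x, 0 < Int.fract (x - β (k + 1)) →
        Int.fract (β (k + 1) - x) = 1 - Int.fract (x - β (k + 1)) :=
      fun x hx => by rw [← Int.fract_neg hx.ne', neg_sub]
    rw [hneg u hpos, hneg v (by rw [heq]; linarith), sub_nonneg]
    exact div_le_div_of_nonneg_left (hcm k hk).le
      (sub_pos.2 (Int.fract_lt_one _)) (by linarith)
  calc cp i / Int.fract (u - β i) - cp i / Int.fract (v - β i)
      = -(cp i / Int.fract (v - β i)) - -(cp i / Int.fract (u - β i)) := by ring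
    _ ≤ ∑ k ∈ Finset.range r, (-(cp k / Int.fract (v - β k)) - -(cp k / Int.fract (u - β k))) :=
      Finset.single_le_sum (fun k hk => hA k (Finset.mem_range.1 hk)) (Finset.mem_range.2 hi)
    _ ≤ _ + ∑ k ∈ Finset.range r, (cm (k + 1) / Int.fract (β (k + 1) - v) -
          cm (k + 1) / Int.fract (β (k + 1) - u)) :=
      le_add_of_nonneg_right (Finset.sum_nonneg fun k hk => hB k (Finset.mem_range.1 hk))
    _ = logfD r β cp cm v - logfD r β cp cm u := by
      simp only [logfD, Finset.sum_sub_distrib]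
      ring

theorem monotoneOn_logfD (hβ : StrictMonoOn β (Iic r)) (hβ0 : β 0 = 0) (hβr : β r = 1)
    (hcp : ∀ i < r, 0 < cp i) (hcm : ∀ i < r, 0 < cm (i + 1)) {i₀ : ℕ} (hi₀ : i₀ < r) :
    MonotoneOn (logfD r β cp cm) (Ioo (β i₀) (β (i₀ + 1))) := by
  intro u hu v hv huv
  obtain ⟨hpos, heq⟩ := fract_sub_breakpoint hβ hβ0 hβr hi₀ hi₀.le hu.1 huv hv.2
  have := div_le_div_of_nonneg_left (hcp i₀ hi₀).le hpos
    (show Int.fract (u - β i₀) ≤ Int.fract (v - β i₀) by linarith)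
  linarith [logfD_sub_logfD_ge hβ hβ0 hβr hcp hcm hi₀ hu.1 huv hv.2 hi₀]

end Breakpoints

section Gaps

variable {r j : ℕ} {β : ℕ → ℝ} {T Tinv : ℝ → ℝ} {a b : ℝ}

theorem partPts_subset_Icc (hβ : StrictMonoOn β (Iic r)) (hβ0 : β 0 = 0) (hβr : β r = 1)
    (hTinv : MapsTo Tinv (Ico 0 1) (Ico 0 1)) : partPts r β Tinv j ⊆ Icc 0 1 := by
  rintro x ((rfl | rfl) | ⟨i, k, -, hir, -, rfl⟩)
  · exact ⟨le_rfl, zero_le_one⟩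
  · exact ⟨zero_le_one, le_rfl⟩
  · exact Ico_subset_Icc_self (hTinv.iterate k (breakpoint_mem_Ico hβ hβ0 hβr hir))

theorem iterate_ne_breakpoint_of_isGap (hT : MapsTo T (Ico 0 1) (Ico 0 1))
    (hTinvT : LeftInvOn Tinv T (Ico 0 1)) (hgap : IsGap (partPts r β Tinv j) a b)
    (ha : 0 ≤ a) (hb : b ≤ 1) {x : ℝ} (hx : x ∈ Ioo a b) {k i : ℕ} (hk : k < j)
    (hi : 1 ≤ i) (hir : i < r) : T^[k] x ≠ β i := by
  intro hxi
  have hxS : x ∈ partPts r β Tinv j := Or.inr ⟨i, k, hi, hir, hk, by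
    rw [← hxi, hTinvT.iterate hT k ⟨ha.trans hx.1.le, hx.2.trans_le hb⟩]⟩
  rcases hgap.2.2.2 x hxS with h | h <;> linarith [hx.1, hx.2]

theorem exists_iterate_eq_add_of_isGap (hβ0 : β 0 = 0) (hβr : β r = 1)
    (hT : MapsTo T (Ico 0 1) (Ico 0 1))
    (hTtrans : ∀ i < r, ∃ v : ℝ, ∀ x ∈ Ico (β i) (β (i + 1)), T x = x + v)
    (hTinvT : LeftInvOn Tinv T (Ico 0 1)) (hgap : IsGap (partPts r β Tinv j) a b)
    (ha : 0 ≤ a) (hb : b ≤ 1) :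
    ∀ k < j, ∃ w, ∃ i < r,
      (∀ x ∈ Ico a b, T^[k] x = x + w) ∧ β i ≤ a + w ∧ b + w ≤ β (i + 1) := by
  have hab := hgap.2.2.1
  have hsegment : ∀ k < j, ∀ w : ℝ, (∀ x ∈ Ico a b, T^[k] x = x + w) →
      ∃ i < r, β i ≤ a + w ∧ b + w ≤ β (i + 1) := by
    intro k hk w hw
    have hsub : Ico (a + w) (b + w) ⊆ Ico 0 1 := fun y hy => by
      have hy' : y - w ∈ Ico a b := ⟨by linarith [hy.1], by linarith [hy.2]⟩
      simpa [hw _ hy'] using hT.iterate k ⟨ha.trans hy'.1, hy'.2.trans_le hb⟩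
    obtain ⟨h0, h1⟩ := (Ico_subset_Ico_iff (by linarith)).1 hsub
    refine exists_between_consecutive hβ0 hβr h0 h1 fun i hi hir hβi => ?_
    refine iterate_ne_breakpoint_of_isGap hT hTinvT hgap ha hb (x := β i - w)
      ⟨by linarith [hβi.1], by linarith [hβi.2]⟩ hk hi hir ?_
    rw [hw _ ⟨by linarith [hβi.1], by linarith [hβi.2]⟩]
    ring
  have htrans : ∀ k < j, ∃ w, ∀ x ∈ Ico a b, T^[k] x = x + w := by
    intro k hk
    induction k with
    | zero => exact ⟨0, fun x _ => (add_zero x).symm⟩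
    | succ k ih =>
      obtain ⟨w, hw⟩ := ih (by omega)
      obtain ⟨i, hi, hiw, hwi⟩ := hsegment k (by omega) w hw
      obtain ⟨v, hv⟩ := hTtrans i hi
      refine ⟨w + v, fun x hx => ?_⟩
      rw [Function.iterate_succ_apply', hw x hx,
        hv _ ⟨by linarith [hx.1], by linarith [hx.2]⟩, add_assoc]
  intro k hk
  obtain ⟨w, hw⟩ := htrans k hk
  obtain ⟨i, hi, hiw, hwi⟩ := hsegment k hk w hw
  exact ⟨w, i, hi, hw, hiw, hwi⟩

theorem exists_iterate_eq_breakpoint_of_isGap (hβ : StrictMonoOn β (Iic r))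
    (hβ0 : β 0 = 0) (hβr : β r = 1) (hTinv : MapsTo Tinv (Ico 0 1) (Ico 0 1))
    (hTTinv : LeftInvOn T Tinv (Ico 0 1)) (hgap : IsGap (partPts r β Tinv j) a b)
    (hb : b ≤ 1) (hj : 0 < j) : ∃ k < j, ∃ i < r, T^[k] a = β i := by
  obtain ⟨ha, -, hab, -⟩ := hgap
  rcases ha with (rfl | rfl) | ⟨i, k, -, hir, hk, rfl⟩
  · exact ⟨0, hj, 0, Nat.pos_of_ne_zero (by rintro rfl; linarith), hβ0.symm⟩
  · linarith
  · exact ⟨k, hk, i, hir, hTTinv.iterate hTinv k (breakpoint_mem_Ico hβ hβ0 hβr hir)⟩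

theorem div_sq_mul_le_birkhoff_logfD_sub {cp cm : ℕ → ℝ} {M : ℝ}
    (hβ : StrictMonoOn β (Iic r)) (hβ0 : β 0 = 0) (hβr : β r = 1)
    (hT : MapsTo T (Ico 0 1) (Ico 0 1))
    (hTtrans : ∀ i < r, ∃ v : ℝ, ∀ x ∈ Ico (β i) (β (i + 1)), T x = x + v)
    (hTinvT : LeftInvOn Tinv T (Ico 0 1)) (hTTinv : LeftInvOn T Tinv (Ico 0 1))
    (hTinv : MapsTo Tinv (Ico 0 1) (Ico 0 1))
    (hcp : ∀ i < r, 0 < cp i) (hcm : ∀ i < r, 0 < cm (i + 1)) (hM : ∀ i < r, M ≤ cp i)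
    (hgap : IsGap (partPts r β Tinv j) a b) (hj : 0 < j) {x y : ℝ} (hx : x ∈ Ioo a b)
    (hy : y ∈ Ioo a b) (hxy : x < y) :
    M / (b - a) ^ 2 * (y - x) ≤
      birkhoff T (logfD r β cp cm) j y - birkhoff T (logfD r β cp cm) j x := by
  set F := logfD r β cp cm
  obtain ⟨ha, -⟩ := partPts_subset_Icc hβ hβ0 hβr hTinv hgap.1
  obtain ⟨-, hb⟩ := partPts_subset_Icc hβ hβ0 hβr hTinv hgap.2.1
  choose! w i hi hw hiw hwi using
    exists_iterate_eq_add_of_isGap hβ0 hβr hT hTtrans hTinvT hgap ha hb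
  have hxI : ∀ k < j, β (i k) < x + w k := fun k hk => by linarith [hiw k hk, hx.1]
  have hyI : ∀ k < j, y + w k < β (i k + 1) := fun k hk => by linarith [hwi k hk, hy.2]
  have hmono : ∀ k ∈ Finset.range j, 0 ≤ F (T^[k] y) - F (T^[k] x) := by
    intro k hk
    have hk := Finset.mem_range.1 hk
    rw [hw k hk y (Ioo_subset_Ico_self hy), hw k hk x (Ioo_subset_Ico_self hx), sub_nonneg]
    exact monotoneOn_logfD hβ hβ0 hβr hcp hcm (hi k hk) ⟨hxI k hk, by linarith [hyI k hk]⟩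
      ⟨by linarith [hxI k hk], hyI k hk⟩ (by linarith)
  obtain ⟨k₀, hk₀, i₀, hi₀, hai₀⟩ :=
    exists_iterate_eq_breakpoint_of_isGap hβ hβ0 hβr hTinv hTTinv hgap hb hj
  rw [hw k₀ hk₀ a (left_mem_Ico.2 hgap.2.2.1)] at hai₀
  have hfract : ∀ z ∈ Ioo a b, Int.fract (z + w k₀ - β i₀) = z - a := fun z hz => by
    rw [← hai₀, add_sub_add_right_eq_sub, Int.fract_eq_self]
    constructor <;> linarith [hz.1, hz.2]
  have hpole : cp i₀ / (x - a) - cp i₀ / (y - a) ≤ F (T^[k₀] y) - F (T^[k₀] x) := by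
    rw [hw k₀ hk₀ y (Ioo_subset_Ico_self hy), hw k₀ hk₀ x (Ioo_subset_Ico_self hx),
      ← hfract x hx, ← hfract y hy]
    exact logfD_sub_logfD_ge hβ hβ0 hβr hcp hcm (hi k₀ hk₀) (hxI k₀ hk₀) (by linarith)
      (hyI k₀ hk₀) hi₀
  have hxa : 0 < x - a := sub_pos.2 hx.1
  have hya : 0 < y - a := sub_pos.2 hy.1
  calc M / (b - a) ^ 2 * (y - x) ≤ cp i₀ / ((x - a) * (y - a)) * (y - x) := by
        refine mul_le_mul_of_nonneg_right ?_ (by linarith)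
        refine div_le_div₀ (hcp i₀ hi₀).le (hM i₀ hi₀) (by positivity) ?_
        nlinarith [hx.2, hy.2]
    _ = cp i₀ / (x - a) - cp i₀ / (y - a) := by field_simp; ring
    _ ≤ F (T^[k₀] y) - F (T^[k₀] x) := hpole
    _ ≤ ∑ k ∈ Finset.range j, (F (T^[k] y) - F (T^[k] x)) :=
      Finset.single_le_sum hmono (Finset.mem_range.2 hk₀)
    _ = birkhoff T F j y - birkhoff T F j x := by rw [birkhoff, birkhoff, Finset.sum_sub_distrib]

end Gaps

theorem ediam_setOf_abs_le_le {s : Set ℝ} {G : ℝ → ℝ} {K t : ℝ} (hK : 0 < K)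
    (hG : ∀ x ∈ s, ∀ y ∈ s, x < y → K * (y - x) ≤ G y - G x) :
    Metric.ediam {x ∈ s | |G x| ≤ t} ≤ ENNReal.ofReal (2 * t / K) := by
  have hdist : ∀ x ∈ {x ∈ s | |G x| ≤ t}, ∀ y ∈ {x ∈ s | |G x| ≤ t}, x ≤ y →
      y - x ≤ 2 * t / K := by
    rintro x ⟨hxs, hxt⟩ y ⟨hys, hyt⟩ hxy
    rw [le_div_iff₀ hK]
    rcases hxy.eq_or_lt with rfl | hlt
    · linarith [abs_nonneg (G x)]
    · linarith [hG x hxs y hys hlt, abs_le.1 hxt, abs_le.1 hyt]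
  refine Metric.ediam_le fun x hx y hy => ?_
  rw [edist_dist, Real.dist_eq]
  refine ENNReal.ofReal_le_ofReal ?_
  rcases le_total x y with hxy | hyx
  · rw [abs_sub_comm, abs_of_nonneg (by linarith)]
    exact hdist x hx y hy hxy
  · rw [abs_of_nonneg (by linarith)]
    exact hdist y hy x hx hyx

theorem ofReal_sub_le_volume_setOf_lt_abs {a b K t : ℝ} {G : ℝ → ℝ} (hK : 0 < K) (ht : 0 ≤ t)
    (hG : ∀ x ∈ Ioo a b, ∀ y ∈ Ioo a b, x < y → K * (y - x) ≤ G y - G x) :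
    ENNReal.ofReal (b - a - 2 * t / K) ≤ volume {x ∈ Ioo a b | t < |G x|} := by
  have hcover : Ioo a b ⊆ {x ∈ Ioo a b | t < |G x|} ∪ {x ∈ Ioo a b | |G x| ≤ t} :=
    fun x hx => (lt_or_ge t |G x|).imp (⟨hx, ·⟩) (⟨hx, ·⟩)
  rw [ENNReal.ofReal_sub _ (by positivity), tsub_le_iff_right, ← Real.volume_Ioo]
  calc volume (Ioo a b)
      ≤ volume {x ∈ Ioo a b | t < |G x|} + volume {x ∈ Ioo a b | |G x| ≤ t} :=
        (measure_mono hcover).trans (measure_union_le _ _)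
    _ ≤ _ := by
      gcongr
      exact (Real.volume_le_diam _).trans (ediam_setOf_abs_le_le hK hG)

theorem stmt1_general
    (r : ℕ)
    (β : ℕ → ℝ) (hβ0 : β 0 = 0) (hβr : β r = 1)
    (hβmono : ∀ i j : ℕ, i < j → j ≤ r → β i < β j)
    (T Tinv : ℝ → ℝ)
    (hTbij : Set.BijOn T (Set.Ico 0 1) (Set.Ico 0 1))
    (hTtrans : ∀ i : ℕ, i < r → ∃ v : ℝ, ∀ x ∈ Set.Ico (β i) (β (i + 1)), T x = x + v)
    (hTinv : ∀ x ∈ Set.Ico (0 : ℝ) 1,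
      Tinv (T x) = x ∧ T (Tinv x) = x ∧ Tinv x ∈ Set.Ico (0 : ℝ) 1)
    (c : ℝ) (hc : 0 < c)
    (hbal : BalancedPartitionLengths r β T Tinv c)
    (cp cm : ℕ → ℝ)
    (hcp : ∀ i : ℕ, i < r → 0 < cp i) (hcm : ∀ i : ℕ, i < r → 0 < cm (i + 1)) :
    ∀ η : ℝ, 0 < η → η < 1 → ∃ δ > (0 : ℝ), ∀ j : ℕ, 6 * c ^ 2 ≤ (j : ℝ) →
      ∀ a b : ℝ, IsGap (partPts r β Tinv j) a b →
        ENNReal.ofReal (η * (b - a)) <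
          volume {x ∈ Set.Ioo a b | δ * (j : ℝ) < |birkhoff T (logfD r β cp cm) j x|} := by
  intro η hη0 hη1
  have hβ : StrictMonoOn β (Iic r) := fun i _ k hk hik => hβmono i k hik hk
  have hr : 0 < r := Nat.pos_of_ne_zero (by rintro rfl; linarith)
  obtain ⟨i₁, hi₁, hmin⟩ := (Finset.range r).exists_min_image cp ⟨0, Finset.mem_range.2 hr⟩
  set M := cp i₁
  have hM : 0 < M := hcp i₁ (Finset.mem_range.1 hi₁)
  have hη : 0 < 1 - η := sub_pos.2 hη1
  refine ⟨(1 - η) * M / (4 * c), by positivity, fun j hj a b hgap => ?_⟩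
  have hj0 : 0 < (j : ℝ) := lt_of_lt_of_le (by positivity) hj
  have hab : 0 < b - a := sub_pos.2 hgap.2.2.1
  have hba : (b - a) * j ≤ c := (le_div_iff₀ hj0).1 (hbal.1 j (by exact_mod_cast hj0) a b hgap).2
  have hsmall : η * (b - a) < b - a - 2 * ((1 - η) * M / (4 * c) * j) / (M / (b - a) ^ 2) := by
    have hrw : 2 * ((1 - η) * M / (4 * c) * j) / (M / (b - a) ^ 2) =
        (1 - η) * (b - a) * ((b - a) * j) / (2 * c) := by
      field_simp
      ring
    have hle : (1 - η) * (b - a) * ((b - a) * j) / (2 * c) ≤ (1 - η) * (b - a) / 2 := by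
      rw [div_le_iff₀ (by positivity)]
      nlinarith [mul_le_mul_of_nonneg_left hba (mul_pos hη hab).le]
    rw [hrw]
    nlinarith
  refine (ENNReal.ofReal_lt_ofReal_iff_of_nonneg (by positivity)).2 hsmall |>.trans_le ?_
  refine ofReal_sub_le_volume_setOf_lt_abs (by positivity) (by positivity) fun x hx y hy hxy => ?_
  exact div_sq_mul_le_birkhoff_logfD_sub hβ hβ0 hβr hTbij.mapsTo hTtrans
    (fun x hx => (hTinv x hx).1) (fun x hx => (hTinv x hx).2.1) (fun x hx => (hTinv x hx).2.2)
    hcp hcm (fun i hi => hmin i (Finset.mem_range.2 hi)) hgap (by exact_mod_cast hj0) hx hy hxy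

/-- Lemma 4.3: for an IET with the IDOC and balanced partition lengths with
constant `c`, for every `0 < η < 1` there is `δ > 0` such that for every `j ≥ 6c²` and
every subinterval `Δ_i^j = (a, b)` of the partition `P_j`, the Lebesgue measure of
`{x ∈ Δ_i^j : |f'^{(j)}(x)| > δ j}` exceeds `η · (b - a)`. -/
theorem stmt1
    (r : ℕ) (hr : 2 ≤ r)
    (β : ℕ → ℝ) (hβ0 : β 0 = 0) (hβr : β r = 1)
    (hβmono : ∀ i j : ℕ, i < j → j ≤ r → β i < β j)
    (T Tinv : ℝ → ℝ)
    (hTbij : Set.BijOn T (Set.Ico 0 1) (Set.Ico 0 1))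
    (hTtrans : ∀ i : ℕ, i < r → ∃ v : ℝ, ∀ x ∈ Set.Ico (β i) (β (i + 1)), T x = x + v)
    (hTinv : ∀ x ∈ Set.Ico (0 : ℝ) 1,
      Tinv (T x) = x ∧ T (Tinv x) = x ∧ Tinv x ∈ Set.Ico (0 : ℝ) 1)
    (hidoc : IDOC r β T)
    (c : ℝ) (hc : 0 < c)
    (hbal : BalancedPartitionLengths r β T Tinv c)
    (cp cm : ℕ → ℝ)
    (hcp : ∀ i : ℕ, i < r → 0 < cp i) (hcm : ∀ i : ℕ, i < r → 0 < cm (i + 1)) :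
    ∀ η : ℝ, 0 < η → η < 1 → ∃ δ > (0 : ℝ), ∀ j : ℕ, 6 * c ^ 2 ≤ (j : ℝ) →
      ∀ a b : ℝ, IsGap (partPts r β Tinv j) a b →
        ENNReal.ofReal (η * (b - a)) <
          volume {x ∈ Set.Ioo a b | δ * (j : ℝ) < |birkhoff T (logfD r β cp cm) j x|} :=
  stmt1_general r β hβ0 hβr hβmono T Tinv hTbij hTtrans hTinv c hc hbal cp cm hcp hcm
end

section
/- Let T be an interval exchange transformation of r ≥ 2 intervals of [0,1) with discontinuity points 0 = β_0 < β_1 < ⋯ < β_{r−1} < β_r = 1 satisfying the infinite distinct orbit condition, and let f(x) = Σ_{i=0}^{r−1} (−c_i⁺ log{x − β_i}) + Σ_{i=0}^{r−1} (−c_{i+1}⁻ log{β_{i+1} − x}) with all c_i⁺, c_{i+1}⁻ > 0. Then for every j ≥ 2 and every 0 ≤ i ≤ (r−1)j, the Birkhoff sum f′^{(j)} of the pointwise derivative f′ of f is strictly increasing on the open interval Δ_i^j = (x_i^j, x_{i+1}^j) of the partition P_j, with lim_{x→(x_i^j)^+} f′^{(j)}(x) = −∞ and lim_{x→(x_{i+1}^j)^−}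 f′^{(j)}(x) = +∞; the same conclusions hold for the Birkhoff sums f′′′^{(j)} of the third derivative f′′′ of f. -/
open MeasureTheory Filter Set
open scoped ENNReal

/-- The pointwise third derivative
`f'''(x) = ∑_{i=0}^{r-1} (-2c_i⁺/{x - β_i}³) + ∑_{i=0}^{r-1} (2c_{i+1}⁻/{β_{i+1} - x}³)`. -/
noncomputable def logfD3 (r : ℕ) (β : ℕ → ℝ) (cp cm : ℕ → ℝ) (x : ℝ) : ℝ :=
  (∑ i ∈ Finset.range r, -(2 * cp i / (Int.fract (x - β i)) ^ 3)) +
  (∑ i ∈ Finset.range r, 2 * cm (i + 1) / (Int.fract (β (i + 1) - x)) ^ 3)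

/-!
On a gap `(a, b)` of `P_j` every iterate `T^k`, `k < j`, is a translation carrying `(a, b)` into
a single interval of continuity `(β_m, β_{m+1})` of `T`. There each pole term
`-c_i⁺/{x - β_i}^p` and `c_{i+1}⁻/{β_{i+1} - x}^p` is strictly increasing, hence so is every
summand `x ↦ h (T^k x)` of the Birkhoff sum, and a sum of increasing functions diverges as soon
as one summand does. The endpoint `a` is `0` or some `T^{-k} β_i`, so `T^k (a, b)` starts at
`β_i`, where `-c_i⁺/{x - β_i}^p → -∞`. Likewise `b` is `1` or some `T^{-k} β_i`; by the IDOC no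
earlier iterate of `b` is a discontinuity of `T`, so `T^k (a, b)` ends at `β_i`, where
`c_i⁻/{β_i - x}^p → +∞`.
-/

open Topology

section Sums

variable {ι : Type*} {s : Finset ι} {f : ι → ℝ → ℝ} {t : Set ℝ}

theorem monotoneOn_finset_sum (hf : ∀ i ∈ s, MonotoneOn (f i) t) :
    MonotoneOn (fun x => ∑ i ∈ s, f i x) t := fun _ hx _ hy hxy =>
  Finset.sum_le_sum fun i hi => hf i hi hx hy hxy

theorem strictMonoOn_finset_sum (hs : s.Nonempty) (hf : ∀ i ∈ s, StrictMonoOn (f i) t) :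
    StrictMonoOn (fun x => ∑ i ∈ s, f i x) t := fun _ hx _ hy hxy =>
  Finset.sum_lt_sum_of_nonempty hs fun i hi => hf i hi hx hy hxy

variable {a b : ℝ} {g h : ℝ → ℝ}

theorem tendsto_add_atBot_of_monotoneOn (hab : a < b) (hg : Tendsto g (𝓝[>] a) atBot)
    (hh : MonotoneOn h (Ioo a b)) : Tendsto (fun x => g x + h x) (𝓝[>] a) atBot := by
  have hc : (a + b) / 2 ∈ Ioo a b := ⟨by linarith, by linarith⟩
  refine tendsto_atBot_add_right_of_ge' _ (h ((a + b) / 2)) hg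
    (eventually_of_mem (Ioo_mem_nhdsGT hc.1) fun x hx => ?_)
  exact hh ⟨hx.1, hx.2.trans hc.2⟩ hc hx.2.le

theorem tendsto_add_atTop_of_monotoneOn (hab : a < b) (hg : Tendsto g (𝓝[<] b) atTop)
    (hh : MonotoneOn h (Ioo a b)) : Tendsto (fun x => g x + h x) (𝓝[<] b) atTop := by
  have hc : (a + b) / 2 ∈ Ioo a b := ⟨by linarith, by linarith⟩
  refine tendsto_atTop_add_right_of_le' _ (h ((a + b) / 2)) hg
    (eventually_of_mem (Ioo_mem_nhdsLT hc.2) fun x hx => ?_)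
  exact hh hc ⟨hc.1.trans hx.1, hx.2⟩ hx.1.le

theorem tendsto_finset_sum_atBot_of_monotoneOn (hab : a < b)
    (hf : ∀ i ∈ s, MonotoneOn (f i) (Ioo a b)) {i : ι} (hi : i ∈ s)
    (hfi : Tendsto (f i) (𝓝[>] a) atBot) : Tendsto (fun x => ∑ i ∈ s, f i x) (𝓝[>] a) atBot := by
  classical
  simp only [← Finset.add_sum_erase s _ hi]
  exact tendsto_add_atBot_of_monotoneOn hab hfi
    (monotoneOn_finset_sum fun k hk => hf k (Finset.mem_of_mem_erase hk))

theorem tendsto_finset_sum_atTop_of_monotoneOn (hab : a < b)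
    (hf : ∀ i ∈ s, MonotoneOn (f i) (Ioo a b)) {i : ι} (hi : i ∈ s)
    (hfi : Tendsto (f i) (𝓝[<] b) atTop) : Tendsto (fun x => ∑ i ∈ s, f i x) (𝓝[<] b) atTop := by
  classical
  simp only [← Finset.add_sum_erase s _ hi]
  exact tendsto_add_atTop_of_monotoneOn hab hfi
    (monotoneOn_finset_sum fun k hk => hf k (Finset.mem_of_mem_erase hk))

end Sums

theorem Int.fract_eqOn_Ioo (n : ℤ) :
    EqOn (Int.fract : ℝ → ℝ) (fun t => t - n) (Ioo (n : ℝ) (n + 1)) :=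
  fun t ht => Int.fract_eq_iff.2 ⟨by linarith [ht.1], by linarith [ht.2], n, by ring⟩

section Poles

variable {C u c d : ℝ} {p : ℕ}

theorem exists_int_mapsTo_sub_Ioo (hu : u ∈ Icc 0 1) (hc : 0 ≤ c) (hd : d ≤ 1)
    (h : u ≤ c ∨ d ≤ u) : ∃ n : ℤ, MapsTo (fun y => y - u) (Ioo c d) (Ioo n (n + 1)) := by
  rcases h with h | h
  · exact ⟨0, fun y hy => by push_cast; constructor <;> linarith [hy.1, hy.2, hu.1, hu.2]⟩
  · exact ⟨-1, fun y hy => by push_cast; constructor <;> linarith [hy.1, hy.2, hu.1, hu.2]⟩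

theorem exists_int_mapsTo_rsub_Ioo (hu : u ∈ Icc 0 1) (hc : 0 ≤ c) (hd : d ≤ 1)
    (h : u ≤ c ∨ d ≤ u) : ∃ n : ℤ, MapsTo (fun y => u - y) (Ioo c d) (Ioo n (n + 1)) := by
  rcases h with h | h
  · exact ⟨-1, fun y hy => by push_cast; constructor <;> linarith [hy.1, hy.2, hu.1, hu.2]⟩
  · exact ⟨0, fun y hy => by push_cast; constructor <;> linarith [hy.1, hy.2, hu.1, hu.2]⟩

theorem strictMonoOn_neg_div_fract_sub_pow (hC : 0 < C) (hp : p ≠ 0) (hu : u ∈ Icc 0 1)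
    (hc : 0 ≤ c) (hd : d ≤ 1) (h : u ≤ c ∨ d ≤ u) :
    StrictMonoOn (fun y => -(C / Int.fract (y - u) ^ p)) (Ioo c d) := by
  obtain ⟨n, hn⟩ := exists_int_mapsTo_sub_Ioo hu hc hd h
  intro x hx y hy hxy
  have hx' : Int.fract (x - u) = x - u - n := Int.fract_eqOn_Ioo n (hn hx)
  have hy' : Int.fract (y - u) = y - u - n := Int.fract_eqOn_Ioo n (hn hy)
  have hpos : 0 < x - u - n := by linarith [(hn hx).1]
  simp only [hx', hy']
  gcongr

theorem strictMonoOn_div_fract_rsub_pow (hC : 0 < C) (hp : p ≠ 0) (hu : u ∈ Icc 0 1)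
    (hc : 0 ≤ c) (hd : d ≤ 1) (h : u ≤ c ∨ d ≤ u) :
    StrictMonoOn (fun y => C / Int.fract (u - y) ^ p) (Ioo c d) := by
  obtain ⟨n, hn⟩ := exists_int_mapsTo_rsub_Ioo hu hc hd h
  intro x hx y hy hxy
  have hx' : Int.fract (u - x) = u - x - n := Int.fract_eqOn_Ioo n (hn hx)
  have hy' : Int.fract (u - y) = u - y - n := Int.fract_eqOn_Ioo n (hn hy)
  have hpos : 0 < u - y - n := by linarith [(hn hy).1]
  simp only [hx', hy']
  gcongr

theorem tendsto_div_pow_sub_nhdsGT (hC : 0 < C) (hp : p ≠ 0) (u : ℝ) :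
    Tendsto (fun y => C / (y - u) ^ p) (𝓝[>] u) atTop := by
  have h0 : Tendsto (fun y => (y - u) ^ p) (𝓝[>] u) (𝓝[>] 0) := by
    have hcont : Continuous fun y : ℝ => (y - u) ^ p := by fun_prop
    have := hcont.continuousWithinAt.tendsto_nhdsWithin
      (s := Ioi u) (x := u) (t := Ioi 0) fun y hy => pow_pos (sub_pos.2 hy) p
    simpa [zero_pow hp] using this
  simpa [div_eq_mul_inv] using h0.inv_tendsto_nhdsGT_zero.const_mul_atTop hC

theorem tendsto_div_pow_rsub_nhdsLT (hC : 0 < C) (hp : p ≠ 0) (u : ℝ) :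
    Tendsto (fun y => C / (u - y) ^ p) (𝓝[<] u) atTop := by
  have h0 : Tendsto (fun y => (u - y) ^ p) (𝓝[<] u) (𝓝[>] 0) := by
    have hcont : Continuous fun y : ℝ => (u - y) ^ p := by fun_prop
    have := hcont.continuousWithinAt.tendsto_nhdsWithin
      (s := Iio u) (x := u) (t := Ioi 0) fun y hy => pow_pos (sub_pos.2 hy) p
    simpa [zero_pow hp] using this
  simpa [div_eq_mul_inv] using h0.inv_tendsto_nhdsGT_zero.const_mul_atTop hC

end Poles

theorem Function.IsPeriodicPt.finite_range_iterate {α : Type*} {f : α → α} {x : α} {n : ℕ}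
    (h : Function.IsPeriodicPt f n x) (hn : 0 < n) : (range fun m => f^[m] x).Finite :=
  ((finite_Iio n).image fun m => f^[m] x).subset <| by
    rintro _ ⟨m, rfl⟩
    exact ⟨m % n, Nat.mod_lt m hn, h.iterate_mod_apply m⟩

theorem IsGap.notMem_Ioo {S : Set ℝ} {a b x : ℝ} (hab : IsGap S a b) (hx : x ∈ S) :
    x ∉ Ioo a b := fun h => (hab.2.2.2 x hx).elim (fun h' => h'.not_gt h.1) fun h' => h'.not_gt h.2

structure IsUnitIntervalPartition (r : ℕ) (β : ℕ → ℝ) : Prop where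
  zero : β 0 = 0
  last : β r = 1
  lt : ∀ i j : ℕ, i < j → j ≤ r → β i < β j

namespace IsUnitIntervalPartition

variable {r : ℕ} {β : ℕ → ℝ}

theorem pos (hβ : IsUnitIntervalPartition r β) : 0 < r :=
  Nat.pos_of_ne_zero fun h => one_ne_zero ((h ▸ hβ.last).symm.trans hβ.zero)

theorem le {i i' : ℕ} (hβ : IsUnitIntervalPartition r β) (h : i ≤ i') (h' : i' ≤ r) :
    β i ≤ β i' :=
  h.eq_or_lt.elim (fun h => h ▸ le_rfl) fun h => (hβ.lt i i' h h').le

theorem mem_Icc {i : ℕ} (hβ : IsUnitIntervalPartition r β) (hi : i ≤ r) : β i ∈ Icc 0 1 :=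
  ⟨hβ.zero ▸ hβ.le (Nat.zero_le i) hi, hβ.last ▸ hβ.le hi le_rfl⟩

theorem mem_Ico {i : ℕ} (hβ : IsUnitIntervalPartition r β) (hi : i < r) : β i ∈ Ico 0 1 :=
  ⟨(hβ.mem_Icc hi.le).1, hβ.last ▸ hβ.lt i r hi le_rfl⟩

theorem le_or_le {i m : ℕ} (hβ : IsUnitIntervalPartition r β) (hi : i ≤ r) (hm : m < r) :
    β i ≤ β m ∨ β (m + 1) ≤ β i :=
  (le_or_gt i m).imp (fun h => hβ.le h hm.le) fun h => hβ.le h hi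

theorem exists_Icc_subset_of_forall_notMem_Ioo (hβ : IsUnitIntervalPartition r β) {c d : ℝ}
    (hc : 0 ≤ c) (hd : d ≤ 1) (h : ∀ i, 1 ≤ i → i < r → β i ∉ Ioo c d) :
    ∃ m < r, β m ≤ c ∧ d ≤ β (m + 1) := by
  classical
  set m := Nat.findGreatest (fun i => β i ≤ c) (r - 1)
  have hr := hβ.pos
  have hmr : m < r := by have := Nat.findGreatest_le (P := fun i => β i ≤ c) (r - 1); omega
  refine ⟨m, hmr,
    Nat.findGreatest_spec (P := fun i => β i ≤ c) (Nat.zero_le _) (hβ.zero ▸ hc), ?_⟩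
  by_contra! hlt
  rcases (show m + 1 ≤ r from hmr).eq_or_lt with hm | hm
  · rw [hm, hβ.last] at hlt
    linarith
  · have hc' : c < β (m + 1) :=
      not_le.1 (Nat.findGreatest_is_greatest (Nat.lt_succ_self m) (by omega))
    exact h (m + 1) (Nat.succ_pos m) hm ⟨hc', hlt⟩

end IsUnitIntervalPartition

structure IsIET (r : ℕ) (β : ℕ → ℝ) (T Tinv : ℝ → ℝ) : Prop
    extends IsUnitIntervalPartition r β where
  bijOn : BijOn T (Ico 0 1) (Ico 0 1)
  translation : ∀ i : ℕ, i < r → ∃ v : ℝ, ∀ x ∈ Ico (β i) (β (i + 1)), T x = x + v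
  inverse : ∀ x ∈ Ico (0 : ℝ) 1, Tinv (T x) = x ∧ T (Tinv x) = x ∧ Tinv x ∈ Ico (0 : ℝ) 1

theorem IDOC.iterate_ne {r : ℕ} {β : ℕ → ℝ} {T : ℝ → ℝ} (hidoc : IDOC r β T) {i i' n : ℕ}
    (hi : 1 ≤ i) (hir : i < r) (hi' : 1 ≤ i') (hi'r : i' < r) (hn : 0 < n) :
    T^[n] (β i) ≠ β i' := by
  intro h
  by_cases hii : i = i'
  · subst hii
    exact hidoc.1 i hi hir (Function.IsPeriodicPt.finite_range_iterate h hn)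
  · exact Set.disjoint_left.1 (hidoc.2 i i' hi hir hi' hi'r hii) ⟨n, h⟩ ⟨0, rfl⟩

namespace IsIET

variable {r : ℕ} {β : ℕ → ℝ} {T Tinv : ℝ → ℝ} {j : ℕ} {a b : ℝ}

theorem iterate_mem (hT : IsIET r β T Tinv) (k : ℕ) {x : ℝ} (hx : x ∈ Ico (0 : ℝ) 1) :
    T^[k] x ∈ Ico (0 : ℝ) 1 :=
  hT.bijOn.mapsTo.iterate k hx

theorem inv_iterate_mem (hT : IsIET r β T Tinv) (k : ℕ) {y : ℝ} (hy : y ∈ Ico (0 : ℝ) 1) :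
    Tinv^[k] y ∈ Ico (0 : ℝ) 1 :=
  MapsTo.iterate (fun x hx => (hT.inverse x hx).2.2) k hy

theorem iterate_inv_iterate (hT : IsIET r β T Tinv) (k : ℕ) {y : ℝ} (hy : y ∈ Ico (0 : ℝ) 1) :
    T^[k] (Tinv^[k] y) = y := by
  induction k generalizing y with
  | zero => rfl
  | succ k ih =>
    rw [Function.iterate_succ_apply Tinv, Function.iterate_succ_apply' T,
      ih (hT.inverse y hy).2.2, (hT.inverse y hy).2.1]

theorem partPts_subset_Icc (hT : IsIET r β T Tinv) : partPts r β Tinv j ⊆ Icc 0 1 := by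
  rintro x ((rfl | rfl) | ⟨i, k, -, hir, -, rfl⟩)
  · exact ⟨le_rfl, zero_le_one⟩
  · exact ⟨zero_le_one, le_rfl⟩
  · exact Ico_subset_Icc_self (hT.inv_iterate_mem k (hT.mem_Ico hir))

theorem mem_partPts_of_iterate_eq (hT : IsIET r β T Tinv) {x : ℝ} {i k : ℕ}
    (hx : x ∈ Ico (0 : ℝ) 1) (hi : 1 ≤ i) (hir : i < r) (hk : k < j) (h : T^[k] x = β i) :
    x ∈ partPts r β Tinv j := by
  have hβi := hT.mem_Ico hir
  refine Or.inr ⟨i, k, hi, hir, hk, hT.bijOn.injOn.iterate hT.bijOn.mapsTo k hx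
    (hT.inv_iterate_mem k hβi) ?_⟩
  rw [h, hT.iterate_inv_iterate k hβi]

theorem exists_iterate_eq_of_mem_partPts (hT : IsIET r β T Tinv) {x : ℝ}
    (hx : x ∈ partPts r β Tinv j) (h0 : x ≠ 0) (h1 : x ≠ 1) :
    ∃ i k, 1 ≤ i ∧ i < r ∧ k < j ∧ T^[k] x = β i := by
  rcases hx with (rfl | rfl) | ⟨i, k, hi, hir, hk, rfl⟩
  · exact absurd rfl h0
  · exact absurd rfl h1
  · exact ⟨i, k, hi, hir, hk, hT.iterate_inv_iterate k (hT.mem_Ico hir)⟩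

theorem Ico_subset_of_isGap (hT : IsIET r β T Tinv) (hab : IsGap (partPts r β Tinv j) a b) :
    Ico a b ⊆ Ico 0 1 :=
  Ico_subset_Ico (hT.partPts_subset_Icc hab.1).1 (hT.partPts_subset_Icc hab.2.1).2

theorem iterate_ne_of_isGap (hT : IsIET r β T Tinv) (hab : IsGap (partPts r β Tinv j) a b)
    {x : ℝ} {i k : ℕ} (hx : x ∈ Ioo a b) (hi : 1 ≤ i) (hir : i < r) (hk : k < j) :
    T^[k] x ≠ β i := fun h =>
  hab.notMem_Ioo (hT.mem_partPts_of_iterate_eq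
    (hT.Ico_subset_of_isGap hab (Ioo_subset_Ico_self hx)) hi hir hk h) hx

theorem exists_Icc_subset_of_isGap (hT : IsIET r β T Tinv)
    (hab : IsGap (partPts r β Tinv j) a b) {k : ℕ} (hk : k < j) {w : ℝ}
    (hw : ∀ x ∈ Ico a b, T^[k] x = x + w) :
    ∃ m < r, β m ≤ a + w ∧ b + w ≤ β (m + 1) := by
  have hab' := hab.2.2.1
  have hmaps : ∀ x ∈ Ico a b, x + w ∈ Ico (0 : ℝ) 1 := fun x hx =>
    hw x hx ▸ hT.iterate_mem k (hT.Ico_subset_of_isGap hab hx)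
  have hd : b + w ≤ 1 := by
    by_contra! h
    have := (hmaps (max a (1 - w)) ⟨le_max_left _ _, max_lt hab' (by linarith)⟩).2
    linarith [le_max_right a (1 - w)]
  refine hT.exists_Icc_subset_of_forall_notMem_Ioo (hmaps a ⟨le_rfl, hab'⟩).1 hd
    fun i hi hir hβi => ?_
  have hx : β i - w ∈ Ioo a b := ⟨by linarith [hβi.1], by linarith [hβi.2]⟩
  exact hT.iterate_ne_of_isGap hab hx hi hir hk (by rw [hw _ (Ioo_subset_Ico_self hx)]; ring)

theorem exists_iterate_eq_add_of_isGap (hT : IsIET r β T Tinv)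
    (hab : IsGap (partPts r β Tinv j) a b) {k : ℕ} (hk : k < j) :
    ∃ w, ∀ x ∈ Ico a b, T^[k] x = x + w := by
  induction k with
  | zero => exact ⟨0, fun x _ => (add_zero x).symm⟩
  | succ k ih =>
    obtain ⟨w, hw⟩ := ih (by omega)
    obtain ⟨m, hm, hma, hmb⟩ := hT.exists_Icc_subset_of_isGap hab (by omega) hw
    obtain ⟨v, hv⟩ := hT.translation m hm
    refine ⟨w + v, fun x hx => ?_⟩
    rw [Function.iterate_succ_apply', hw x hx,
      hv _ ⟨by linarith [hx.1], by linarith [hx.2]⟩, add_assoc]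

/-- `T` is discontinuous only at the `β i`, and by the IDOC no `T^l b` with `l < k` is one of
them when `T^k b` is; so `T^k` is a translation on `[a, b]`, not only on `[a, b)`. -/
theorem iterate_right_of_isGap (hT : IsIET r β T Tinv) (hidoc : IDOC r β T)
    (hab : IsGap (partPts r β Tinv j) a b) (hb1 : b < 1) {i₀ k₀ : ℕ} (hi₀ : 1 ≤ i₀)
    (hi₀r : i₀ < r) (hk₀ : k₀ < j) (hb : T^[k₀] b = β i₀) {k : ℕ} (hk : k ≤ k₀) :
    T^[k] b = T^[k] a + (b - a) := by
  induction k with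
  | zero => simp
  | succ k ih =>
    obtain ⟨w, hw⟩ := hT.exists_iterate_eq_add_of_isGap hab (by omega : k < j)
    obtain ⟨m, hm, hma, hmb⟩ := hT.exists_Icc_subset_of_isGap hab (by omega) hw
    obtain ⟨v, hv⟩ := hT.translation m hm
    have hwa : T^[k] a = a + w := hw a ⟨le_rfl, hab.2.2.1⟩
    have hwb : T^[k] b = b + w := by rw [ih (by omega), hwa]; ring
    have hlt : b + w < β (m + 1) := by
      refine hmb.lt_of_ne fun heq => ?_
      have hTb : T^[k] b ∈ Ico (0 : ℝ) 1 :=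
        hT.iterate_mem k ⟨(hT.partPts_subset_Icc hab.2.1).1, hb1⟩
      have hmr : m + 1 < r := by
        refine (show m + 1 ≤ r from hm).lt_of_ne fun h => ?_
        rw [hwb, heq, h, hT.last] at hTb
        exact lt_irrefl _ hTb.2
      refine hidoc.iterate_ne (n := k₀ - k) (Nat.succ_pos m) hmr hi₀ hi₀r (by omega) ?_
      rw [← heq, ← hwb, ← Function.iterate_add_apply, Nat.sub_add_cancel (by omega), hb]
    rw [Function.iterate_succ_apply', Function.iterate_succ_apply', hwb, hwa,
      hv _ ⟨hma.trans (by linarith [hab.2.2.1]), hlt⟩, hv _ ⟨hma, by linarith [hab.2.2.1]⟩]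
    ring

theorem exists_iterate_left_eq_of_isGap (hT : IsIET r β T Tinv)
    (hab : IsGap (partPts r β Tinv j) a b) (hj : 1 ≤ j) :
    ∃ k < j, ∃ i < r, T^[k] a = β i := by
  by_cases ha : a = 0
  · exact ⟨0, hj, 0, hT.pos, by rw [ha, hT.zero]; rfl⟩
  have ha1 : a ≠ 1 := (hab.2.2.1.trans_le (hT.partPts_subset_Icc hab.2.1).2).ne
  obtain ⟨i, k, -, hir, hk, h⟩ := hT.exists_iterate_eq_of_mem_partPts hab.1 ha ha1
  exact ⟨k, hk, i, hir, h⟩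

theorem exists_iterate_right_eq_of_isGap (hT : IsIET r β T Tinv) (hidoc : IDOC r β T)
    (hab : IsGap (partPts r β Tinv j) a b) (hj : 1 ≤ j) :
    ∃ k < j, ∃ i < r, T^[k] a + (b - a) = β (i + 1) := by
  rcases (hT.partPts_subset_Icc hab.2.1).2.eq_or_lt with hb1 | hb1
  · refine ⟨0, hj, r - 1, Nat.sub_lt hT.pos one_pos, ?_⟩
    rw [Nat.sub_add_cancel (Nat.one_le_of_lt hT.pos), hT.last, hb1]
    simp
  have hb0 : b ≠ 0 := ((hT.partPts_subset_Icc hab.1).1.trans_lt hab.2.2.1).ne'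
  obtain ⟨i, k, hi, hir, hk, h⟩ := hT.exists_iterate_eq_of_mem_partPts hab.2.1 hb0 hb1.ne
  refine ⟨k, hk, i - 1, by omega, ?_⟩
  rw [Nat.sub_add_cancel hi, ← h, hT.iterate_right_of_isGap hidoc hab hb1 hi hir hk h le_rfl]

theorem strictMonoOn_comp_iterate_of_isGap (hT : IsIET r β T Tinv) {h : ℝ → ℝ}
    (hh : ∀ m < r, StrictMonoOn h (Ioo (β m) (β (m + 1))))
    (hab : IsGap (partPts r β Tinv j) a b) {k : ℕ} (hk : k < j) :
    StrictMonoOn (fun x => h (T^[k] x)) (Ioo a b) := by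
  obtain ⟨w, hw⟩ := hT.exists_iterate_eq_add_of_isGap hab hk
  obtain ⟨m, hm, hma, hmb⟩ := hT.exists_Icc_subset_of_isGap hab hk hw
  intro x hx y hy hxy
  simp only [hw x (Ioo_subset_Ico_self hx), hw y (Ioo_subset_Ico_self hy)]
  exact hh m hm ⟨by linarith [hx.1], by linarith [hx.2]⟩ ⟨by linarith [hy.1], by linarith [hy.2]⟩
    (by linarith)

theorem tendsto_comp_iterate_nhdsGT_of_isGap (hT : IsIET r β T Tinv)
    (hab : IsGap (partPts r β Tinv j) a b) {k : ℕ} (hk : k < j) {h : ℝ → ℝ} {l : Filter ℝ}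
    (hh : Tendsto h (𝓝[>] (T^[k] a)) l) :
    Tendsto (fun x => h (T^[k] x)) (𝓝[>] a) l := by
  obtain ⟨w, hw⟩ := hT.exists_iterate_eq_add_of_isGap hab hk
  rw [hw a ⟨le_rfl, hab.2.2.1⟩] at hh
  have hshift : Tendsto (· + w) (𝓝[>] a) (𝓝[>] (a + w)) :=
    (continuous_add_const w).continuousWithinAt.tendsto_nhdsWithin fun x hx =>
      add_lt_add_left hx w
  refine (hh.comp hshift).congr' (eventually_of_mem (Ioo_mem_nhdsGT hab.2.2.1) fun x hx => ?_)
  simp only [Function.comp_apply, hw x (Ioo_subset_Ico_self hx)]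

theorem tendsto_comp_iterate_nhdsLT_of_isGap (hT : IsIET r β T Tinv)
    (hab : IsGap (partPts r β Tinv j) a b) {k : ℕ} (hk : k < j) {h : ℝ → ℝ} {l : Filter ℝ}
    (hh : Tendsto h (𝓝[<] (T^[k] a + (b - a))) l) :
    Tendsto (fun x => h (T^[k] x)) (𝓝[<] b) l := by
  obtain ⟨w, hw⟩ := hT.exists_iterate_eq_add_of_isGap hab hk
  rw [hw a ⟨le_rfl, hab.2.2.1⟩, show a + w + (b - a) = b + w by ring] at hh
  have hshift : Tendsto (· + w) (𝓝[<] b) (𝓝[<] (b + w)) :=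
    (continuous_add_const w).continuousWithinAt.tendsto_nhdsWithin fun x hx =>
      add_lt_add_left hx w
  refine (hh.comp hshift).congr' (eventually_of_mem (Ioo_mem_nhdsLT hab.2.2.1) fun x hx => ?_)
  simp only [Function.comp_apply, hw x (Ioo_subset_Ico_self hx)]

end IsIET

theorem IsIET.birkhoff_of_isGap {r : ℕ} {β : ℕ → ℝ} {T Tinv : ℝ → ℝ} {j : ℕ} {a b : ℝ}
    (hT : IsIET r β T Tinv) (hidoc : IDOC r β T) {h : ℝ → ℝ}
    (hmono : ∀ m < r, StrictMonoOn h (Ioo (β m) (β (m + 1))))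
    (hbot : ∀ i < r, Tendsto h (𝓝[>] β i) atBot)
    (htop : ∀ i < r, Tendsto h (𝓝[<] β (i + 1)) atTop)
    (hj : 1 ≤ j) (hab : IsGap (partPts r β Tinv j) a b) :
    StrictMonoOn (birkhoff T h j) (Ioo a b) ∧ Tendsto (birkhoff T h j) (𝓝[>] a) atBot ∧
      Tendsto (birkhoff T h j) (𝓝[<] b) atTop := by
  have hterm : ∀ k ∈ Finset.range j, StrictMonoOn (fun x => h (T^[k] x)) (Ioo a b) :=
    fun k hk => hT.strictMonoOn_comp_iterate_of_isGap hmono hab (Finset.mem_range.1 hk)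
  have hterm' := fun k hk => (hterm k hk).monotoneOn
  obtain ⟨k₁, hk₁, i₁, hi₁, ha⟩ := hT.exists_iterate_left_eq_of_isGap hab hj
  obtain ⟨k₂, hk₂, i₂, hi₂, hb⟩ := hT.exists_iterate_right_eq_of_isGap hidoc hab hj
  refine ⟨strictMonoOn_finset_sum ⟨0, Finset.mem_range.2 hj⟩ hterm, ?_, ?_⟩
  · exact tendsto_finset_sum_atBot_of_monotoneOn hab.2.2.1 hterm' (Finset.mem_range.2 hk₁)
      (hT.tendsto_comp_iterate_nhdsGT_of_isGap hab hk₁ (ha ▸ hbot i₁ hi₁))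
  · exact tendsto_finset_sum_atTop_of_monotoneOn hab.2.2.1 hterm' (Finset.mem_range.2 hk₂)
      (hT.tendsto_comp_iterate_nhdsLT_of_isGap hab hk₂ (hb ▸ htop i₂ hi₂))

/-- `f'` is `poleSum r β cp cm 1`, and `f'''` is `poleSum r β (2 * cp) (2 * cm) 3`. -/
noncomputable def poleSum (r : ℕ) (β : ℕ → ℝ) (cp cm : ℕ → ℝ) (p : ℕ) (x : ℝ) : ℝ :=
  (∑ i ∈ Finset.range r, -(cp i / Int.fract (x - β i) ^ p)) +
  ∑ i ∈ Finset.range r, cm (i + 1) / Int.fract (β (i + 1) - x) ^ p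

namespace IsUnitIntervalPartition

variable {r : ℕ} {β : ℕ → ℝ} {cp cm : ℕ → ℝ} {p : ℕ}

theorem strictMonoOn_poleSum_left (hβ : IsUnitIntervalPartition r β)
    (hcp : ∀ i : ℕ, i < r → 0 < cp i) (hp : p ≠ 0) {i m : ℕ} (hi : i ∈ Finset.range r)
    (hm : m < r) :
    StrictMonoOn (fun y => -(cp i / Int.fract (y - β i) ^ p)) (Ioo (β m) (β (m + 1))) :=
  have hi := Finset.mem_range.1 hi
  strictMonoOn_neg_div_fract_sub_pow (hcp i hi) hp (hβ.mem_Icc hi.le) (hβ.mem_Icc hm.le).1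
    (hβ.mem_Icc hm).2 (hβ.le_or_le hi.le hm)

theorem strictMonoOn_poleSum_right (hβ : IsUnitIntervalPartition r β)
    (hcm : ∀ i : ℕ, i < r → 0 < cm (i + 1)) (hp : p ≠ 0) {i m : ℕ} (hi : i ∈ Finset.range r)
    (hm : m < r) :
    StrictMonoOn (fun y => cm (i + 1) / Int.fract (β (i + 1) - y) ^ p) (Ioo (β m) (β (m + 1))) :=
  have hi := Finset.mem_range.1 hi
  strictMonoOn_div_fract_rsub_pow (hcm i hi) hp (hβ.mem_Icc hi) (hβ.mem_Icc hm.le).1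
    (hβ.mem_Icc hm).2 (hβ.le_or_le hi hm)

theorem strictMonoOn_poleSum (hβ : IsUnitIntervalPartition r β)
    (hcp : ∀ i : ℕ, i < r → 0 < cp i) (hcm : ∀ i : ℕ, i < r → 0 < cm (i + 1)) (hp : p ≠ 0)
    {m : ℕ} (hm : m < r) : StrictMonoOn (poleSum r β cp cm p) (Ioo (β m) (β (m + 1))) :=
  have hr : (Finset.range r).Nonempty := ⟨0, Finset.mem_range.2 hβ.pos⟩
  (strictMonoOn_finset_sum hr fun _ hi => hβ.strictMonoOn_poleSum_left hcp hp hi hm).add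
    (strictMonoOn_finset_sum hr fun _ hi => hβ.strictMonoOn_poleSum_right hcm hp hi hm)

theorem tendsto_poleSum_nhdsGT (hβ : IsUnitIntervalPartition r β)
    (hcp : ∀ i : ℕ, i < r → 0 < cp i) (hcm : ∀ i : ℕ, i < r → 0 < cm (i + 1)) (hp : p ≠ 0)
    {i : ℕ} (hi : i < r) : Tendsto (poleSum r β cp cm p) (𝓝[>] β i) atBot := by
  have hlt : β i < β (i + 1) := hβ.lt i (i + 1) (Nat.lt_succ_self i) hi
  have hpole : Tendsto (fun y => -(cp i / Int.fract (y - β i) ^ p)) (𝓝[>] β i) atBot := by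
    refine (tendsto_neg_atTop_atBot.comp (tendsto_div_pow_sub_nhdsGT (hcp i hi) hp (β i))).congr'
      (eventually_of_mem (Ioo_mem_nhdsGT hlt) fun y hy => ?_)
    dsimp only [Function.comp_apply]
    rw [Int.fract_eq_self.2
      ⟨by linarith [hy.1], by linarith [hy.2, (hβ.mem_Icc hi).2, (hβ.mem_Icc hi.le).1]⟩]
  exact tendsto_add_atBot_of_monotoneOn hlt
    (tendsto_finset_sum_atBot_of_monotoneOn hlt
      (fun _ hk => (hβ.strictMonoOn_poleSum_left hcp hp hk hi).monotoneOn)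
      (Finset.mem_range.2 hi) hpole)
    (monotoneOn_finset_sum fun _ hk => (hβ.strictMonoOn_poleSum_right hcm hp hk hi).monotoneOn)

theorem tendsto_poleSum_nhdsLT (hβ : IsUnitIntervalPartition r β)
    (hcp : ∀ i : ℕ, i < r → 0 < cp i) (hcm : ∀ i : ℕ, i < r → 0 < cm (i + 1)) (hp : p ≠ 0)
    {i : ℕ} (hi : i < r) : Tendsto (poleSum r β cp cm p) (𝓝[<] β (i + 1)) atTop := by
  have hlt : β i < β (i + 1) := hβ.lt i (i + 1) (Nat.lt_succ_self i) hi
  have hpole : Tendsto (fun y => cm (i + 1) / Int.fract (β (i + 1) - y) ^ p)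
      (𝓝[<] β (i + 1)) atTop := by
    refine (tendsto_div_pow_rsub_nhdsLT (hcm i hi) hp (β (i + 1))).congr'
      (eventually_of_mem (Ioo_mem_nhdsLT hlt) fun y hy => ?_)
    dsimp only
    rw [Int.fract_eq_self.2
      ⟨by linarith [hy.2], by linarith [hy.1, (hβ.mem_Icc hi).2, (hβ.mem_Icc hi.le).1]⟩]
  refine (tendsto_add_atTop_of_monotoneOn hlt
    (tendsto_finset_sum_atTop_of_monotoneOn hlt
      (fun _ hk => (hβ.strictMonoOn_poleSum_right hcm hp hk hi).monotoneOn)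
      (Finset.mem_range.2 hi) hpole)
    (monotoneOn_finset_sum fun _ hk =>
      (hβ.strictMonoOn_poleSum_left hcp hp hk hi).monotoneOn)).congr fun y => add_comm _ _

end IsUnitIntervalPartition

theorem IsIET.birkhoff_poleSum_of_isGap {r : ℕ} {β : ℕ → ℝ} {T Tinv : ℝ → ℝ} {j : ℕ}
    {a b : ℝ} {cp cm : ℕ → ℝ} {p : ℕ} (hT : IsIET r β T Tinv) (hidoc : IDOC r β T)
    (hcp : ∀ i : ℕ, i < r → 0 < cp i) (hcm : ∀ i : ℕ, i < r → 0 < cm (i + 1)) (hp : p ≠ 0)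
    (hj : 1 ≤ j) (hab : IsGap (partPts r β Tinv j) a b) :
    StrictMonoOn (birkhoff T (poleSum r β cp cm p) j) (Ioo a b) ∧
      Tendsto (birkhoff T (poleSum r β cp cm p) j) (𝓝[>] a) atBot ∧
      Tendsto (birkhoff T (poleSum r β cp cm p) j) (𝓝[<] b) atTop :=
  hT.birkhoff_of_isGap hidoc (fun _ hm => hT.strictMonoOn_poleSum hcp hcm hp hm)
    (fun _ hi => hT.tendsto_poleSum_nhdsGT hcp hcm hp hi)
    (fun _ hi => hT.tendsto_poleSum_nhdsLT hcp hcm hp hi) hj hab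

theorem stmt2_general
    (r : ℕ)
    (β : ℕ → ℝ) (hβ0 : β 0 = 0) (hβr : β r = 1)
    (hβmono : ∀ i j : ℕ, i < j → j ≤ r → β i < β j)
    (T Tinv : ℝ → ℝ)
    (hTbij : Set.BijOn T (Set.Ico 0 1) (Set.Ico 0 1))
    (hTtrans : ∀ i : ℕ, i < r → ∃ v : ℝ, ∀ x ∈ Set.Ico (β i) (β (i + 1)), T x = x + v)
    (hTinv : ∀ x ∈ Set.Ico (0 : ℝ) 1,
      Tinv (T x) = x ∧ T (Tinv x) = x ∧ Tinv x ∈ Set.Ico (0 : ℝ) 1)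
    (hidoc : IDOC r β T)
    (cp cm : ℕ → ℝ)
    (hcp : ∀ i : ℕ, i < r → 0 < cp i) (hcm : ∀ i : ℕ, i < r → 0 < cm (i + 1)) :
    ∀ j : ℕ, 2 ≤ j → ∀ a b : ℝ, IsGap (partPts r β Tinv j) a b →
      (StrictMonoOn (birkhoff T (logfD r β cp cm) j) (Set.Ioo a b) ∧
        Tendsto (birkhoff T (logfD r β cp cm) j) (nhdsWithin a (Set.Ioi a)) atBot ∧
        Tendsto (birkhoff T (logfD r β cp cm) j) (nhdsWithin b (Set.Iio b)) atTop) ∧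
      (StrictMonoOn (birkhoff T (logfD3 r β cp cm) j) (Set.Ioo a b) ∧
        Tendsto (birkhoff T (logfD3 r β cp cm) j) (nhdsWithin a (Set.Ioi a)) atBot ∧
        Tendsto (birkhoff T (logfD3 r β cp cm) j) (nhdsWithin b (Set.Iio b)) atTop) := by
  intro j hj a b hab
  have hT : IsIET r β T Tinv := ⟨⟨hβ0, hβr, hβmono⟩, hTbij, hTtrans, hTinv⟩
  have hD : logfD r β cp cm = poleSum r β cp cm 1 := by
    funext x
    simp only [logfD, poleSum, pow_one]
  have hD3 : logfD3 r β cp cm = poleSum r β (fun i => 2 * cp i) (fun i => 2 * cm i) 3 := rfl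
  rw [hD, hD3]
  exact ⟨hT.birkhoff_poleSum_of_isGap hidoc hcp hcm one_ne_zero (by omega) hab,
    hT.birkhoff_poleSum_of_isGap hidoc (fun i hi => mul_pos two_pos (hcp i hi))
      (fun i hi => mul_pos two_pos (hcm i hi)) three_ne_zero (by omega) hab⟩

/-- Lemma 4.1: for every `j ≥ 2` and every subinterval
`Δ_i^j = (x_i^j, x_{i+1}^j)` of the partition `P_j`, the Birkhoff sum `f'^{(j)}` is
strictly increasing on `Δ_i^j`, tends to `-∞` at the left endpoint and to `+∞` at the
right endpoint; and the same holds for `f'''^{(j)}`. -/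
theorem stmt2
    (r : ℕ) (hr : 2 ≤ r)
    (β : ℕ → ℝ) (hβ0 : β 0 = 0) (hβr : β r = 1)
    (hβmono : ∀ i j : ℕ, i < j → j ≤ r → β i < β j)
    (T Tinv : ℝ → ℝ)
    (hTbij : Set.BijOn T (Set.Ico 0 1) (Set.Ico 0 1))
    (hTtrans : ∀ i : ℕ, i < r → ∃ v : ℝ, ∀ x ∈ Set.Ico (β i) (β (i + 1)), T x = x + v)
    (hTinv : ∀ x ∈ Set.Ico (0 : ℝ) 1,
      Tinv (T x) = x ∧ T (Tinv x) = x ∧ Tinv x ∈ Set.Ico (0 : ℝ) 1)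
    (hidoc : IDOC r β T)
    (cp cm : ℕ → ℝ)
    (hcp : ∀ i : ℕ, i < r → 0 < cp i) (hcm : ∀ i : ℕ, i < r → 0 < cm (i + 1)) :
    ∀ j : ℕ, 2 ≤ j → ∀ a b : ℝ, IsGap (partPts r β Tinv j) a b →
      (StrictMonoOn (birkhoff T (logfD r β cp cm) j) (Set.Ioo a b) ∧
        Tendsto (birkhoff T (logfD r β cp cm) j) (nhdsWithin a (Set.Ioi a)) atBot ∧
        Tendsto (birkhoff T (logfD r β cp cm) j) (nhdsWithin b (Set.Iio b)) atTop) ∧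
      (StrictMonoOn (birkhoff T (logfD3 r β cp cm) j) (Set.Ioo a b) ∧
        Tendsto (birkhoff T (logfD3 r β cp cm) j) (nhdsWithin a (Set.Ioi a)) atBot ∧
        Tendsto (birkhoff T (logfD3 r β cp cm) j) (nhdsWithin b (Set.Iio b)) atTop) :=
  stmt2_general r β hβ0 hβr hβmono T Tinv hTbij hTtrans hTinv hidoc cp cm hcp hcm
end

section
/- Let H = {h_α : (a_α, b_α) → ℝ : α ∈ A} be a family of monotone, differentiable, convex functions defined on bounded open intervals (a_α, b_α) ⊂ ℝ. Suppose that for every 0 < η < 1 there exists δ̃ > 0 such that for every α ∈ A, the Lebesgue measure of {x ∈ (a_α, b_α) : |h_α′(x)| > δ̃/(b_α − a_α)} is greater than η(b_α − a_α). Then for every 0 < η̃ < 1 there exists ε > 0 such that for every t > 0 and every α ∈ A, the Lebesgue measure of {x ∈ (a_α, b_α) : |h_α(x) − t| < 2ε} is at most η̃(b_α − a_α). -/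
/-!
On the set where `|h'| > δ/(b - a)`, which fills all but a fraction `η/2` of the interval, a
monotone convex `h` grows at rate at least `δ/(b - a)`: for points `x < y` there, the tangent at `x`
(increasing case) or at `y` (decreasing case) lies below the chord. If the level band
`{|h - t| < 2ε}` took more than a fraction `η` of the interval, it would meet that set in measure
more than `η (b - a)/2`, hence contain two such points at distance more than `η (b - a)/2`, on
which `h` differs by more than `δ η/2`; this is impossible for `ε = δ η/16`.
-/

open MeasureTheory Set

theorem MeasureTheory.lt_measure_inter_of_add_le {α : Type*} [MeasurableSpace α]
    {μ : Measure α} {s t u : Set α} (ht : MeasurableSet t) (hsu : s ⊆ u) (htu : t ⊆ u)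
    {p q r : ENNReal} (hp : p < μ s) (hq : q < μ t) (hpqr : μ u + r ≤ p + q) :
    r < μ (s ∩ t) := by
  by_contra! hst
  have := calc
    p + q < μ s + μ t := ENNReal.add_lt_add hp hq
    _ = μ (s ∪ t) + μ (s ∩ t) := (measure_union_add_inter s ht).symm
    _ ≤ μ u + r := add_le_add (measure_mono (union_subset hsu htu)) hst
  exact (this.trans_le hpqr).false

theorem Real.exists_lt_sub_of_ofReal_lt_volume {s : Set ℝ} {L : ℝ}
    (hs : ENNReal.ofReal L < volume s) : ∃ x ∈ s, ∃ y ∈ s, L < y - x := by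
  by_contra! H
  have hdiam : Metric.ediam s ≤ ENNReal.ofReal L := by
    refine Metric.ediam_le fun x hx y hy => ?_
    rw [edist_dist, Real.dist_eq]
    exact ENNReal.ofReal_le_ofReal (abs_sub_le_iff.2 ⟨H y hy x hx, H x hx y hy⟩)
  exact (hs.trans_le ((Real.volume_le_diam s).trans hdiam)).false

theorem ConvexOn.mul_sub_lt_abs_sub {f : ℝ → ℝ} {s : Set ℝ} {c x y : ℝ} (hs : IsOpen s)
    (hf : ConvexOn ℝ s f) (hmono : MonotoneOn f s ∨ AntitoneOn f s) (hx : x ∈ s) (hy : y ∈ s)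
    (hxy : x < y) (hc : 0 ≤ c) (hcx : c < |deriv f x|) (hcy : c < |deriv f y|) :
    c * (y - x) < |f y - f x| := by
  have hyx : 0 < y - x := sub_pos.2 hxy
  rcases hmono with hm | hm
  · have hdx : DifferentiableAt ℝ f x :=
      differentiableAt_of_deriv_ne_zero (abs_pos.1 (hc.trans_lt hcx))
    have hnonneg : 0 ≤ deriv f x := by
      rw [← derivWithin_of_isOpen hs hx]; exact hm.derivWithin_nonneg
    have htangent := hf.deriv_le_slope hx hy hxy hdx
    rw [slope_def_field, le_div_iff₀ hyx] at htangent
    rw [abs_of_nonneg hnonneg] at hcx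
    calc c * (y - x) < deriv f x * (y - x) := mul_lt_mul_of_pos_right hcx hyx
      _ ≤ f y - f x := htangent
      _ ≤ |f y - f x| := le_abs_self _
  · have hdy : DifferentiableAt ℝ f y :=
      differentiableAt_of_deriv_ne_zero (abs_pos.1 (hc.trans_lt hcy))
    have hnonpos : deriv f y ≤ 0 := by
      rw [← derivWithin_of_isOpen hs hy]; exact hm.derivWithin_nonpos
    have htangent := hf.slope_le_deriv hx hy hxy hdy
    rw [slope_def_field, div_le_iff₀ hyx] at htangent
    rw [abs_of_nonpos hnonpos] at hcy
    calc c * (y - x) < -deriv f y * (y - x) := mul_lt_mul_of_pos_right hcy hyx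
      _ ≤ -(f y - f x) := by linarith
      _ ≤ |f y - f x| := neg_le_abs _

theorem stmt3_general {A : Type*} (a b : A → ℝ) (h : A → ℝ → ℝ)
    (hab : ∀ α : A, a α < b α)
    (hmono : ∀ α : A, MonotoneOn (h α) (Set.Ioo (a α) (b α)) ∨
      AntitoneOn (h α) (Set.Ioo (a α) (b α)))
    (hconv : ∀ α : A, ConvexOn ℝ (Set.Ioo (a α) (b α)) (h α))
    (hyp : ∀ η : ℝ, 0 < η → η < 1 → ∃ δ > (0 : ℝ), ∀ α : A,
      ENNReal.ofReal (η * (b α - a α)) <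
        volume {x ∈ Set.Ioo (a α) (b α) | δ / (b α - a α) < |deriv (h α) x|}) :
    ∀ η' : ℝ, 0 < η' → η' < 1 → ∃ ε > (0 : ℝ), ∀ t : ℝ, 0 < t → ∀ α : A,
      volume {x ∈ Set.Ioo (a α) (b α) | |h α x - t| < 2 * ε}
        ≤ ENNReal.ofReal (η' * (b α - a α)) := by
  intro η hη0 hη1
  obtain ⟨δ, hδ, hsteep⟩ := hyp (1 - η / 2) (by linarith) (by linarith)
  refine ⟨δ * η / 16, by positivity, fun t _ α => ?_⟩
  by_contra! hband
  have hba : 0 < b α - a α := sub_pos.2 (hab α)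
  have hmeas : MeasurableSet {x ∈ Ioo (a α) (b α) | δ / (b α - a α) < |deriv (h α) x|} :=
    measurableSet_Ioo.inter <|
      measurableSet_lt (g := fun x => |deriv (h α) x|) measurable_const (measurable_deriv _).abs
  have hinter := lt_measure_inter_of_add_le hmeas (sep_subset _ _) (sep_subset _ _) hband
    (hsteep α) (r := ENNReal.ofReal (η / 2 * (b α - a α))) <| by
      rw [Real.volume_Ioo, ← ENNReal.ofReal_add (by positivity) (by positivity),
        ← ENNReal.ofReal_add (by positivity) (by nlinarith)]
      exact (congrArg ENNReal.ofReal (by ring)).le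
  obtain ⟨x, ⟨⟨hx, hxt⟩, -, hxd⟩, y, ⟨⟨hy, hyt⟩, -, hyd⟩, hxy⟩ :=
    Real.exists_lt_sub_of_ofReal_lt_volume hinter
  have hgrowth := (hconv α).mul_sub_lt_abs_sub isOpen_Ioo (hmono α) hx hy (by nlinarith)
    (by positivity) hxd hyd
  have hclose : |h α y - h α x| < 4 * (δ * η / 16) := by
    rw [abs_lt] at hxt hyt ⊢; constructor <;> linarith
  have hfar : δ / (b α - a α) * (η / 2 * (b α - a α)) < δ / (b α - a α) * (y - x) := by
    gcongr
  rw [mul_left_comm, div_mul_cancel₀ _ hba.ne'] at hfar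
  nlinarith

/-- Lemma 4.4: let `{h_α : (a_α, b_α) → ℝ}` be a family of monotone,
differentiable, convex functions on bounded open intervals. If for every `0 < η < 1`
there is `δ̃ > 0` such that for every `α` the Lebesgue measure of
`{x ∈ (a_α, b_α) : |h_α'(x)| > δ̃/(b_α - a_α)}` exceeds `η (b_α - a_α)`, then for every
`0 < η̃ < 1` there is `ε > 0` such that for every `t > 0` and every `α`, the Lebesgue
measure of `{x ∈ (a_α, b_α) : |h_α(x) - t| < 2ε}` is at most `η̃ (b_α - a_α)`. -/
theorem stmt3 {A : Type*} (a b : A → ℝ) (h : A → ℝ → ℝ)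
    (hab : ∀ α : A, a α < b α)
    (hmono : ∀ α : A, MonotoneOn (h α) (Set.Ioo (a α) (b α)) ∨
      AntitoneOn (h α) (Set.Ioo (a α) (b α)))
    (hdiff : ∀ α : A, DifferentiableOn ℝ (h α) (Set.Ioo (a α) (b α)))
    (hconv : ∀ α : A, ConvexOn ℝ (Set.Ioo (a α) (b α)) (h α))
    (hyp : ∀ η : ℝ, 0 < η → η < 1 → ∃ δ > (0 : ℝ), ∀ α : A,
      ENNReal.ofReal (η * (b α - a α)) <
        volume {x ∈ Set.Ioo (a α) (b α) | δ / (b α - a α) < |deriv (h α) x|}) :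
    ∀ η' : ℝ, 0 < η' → η' < 1 → ∃ ε > (0 : ℝ), ∀ t : ℝ, 0 < t → ∀ α : A,
      volume {x ∈ Set.Ioo (a α) (b α) | |h α x - t| < 2 * ε}
        ≤ ENNReal.ofReal (η' * (b α - a α)) :=
  stmt3_general a b h hab hmono hconv hyp
end
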